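/- arXiv:2112.02746 — 4 statements merged into one kernel-verified Lean document; each statement's English description precedes it below -/
import Mathlib

section
/- Let D(θ) = P(x ≤ θ | g=0) − P(x ≤ θ | g=1) denote the positive-rate gap of a threshold classifier. Assuming differentiability, D'(θ) = h_x(θ)·(P(g=1) − P(g=1 | x=θ))/(P(g=1)·P(g=0)). -/
/- Encoding: `J1 θ = P(g=1, x ≤ θ)`, `J0 θ = P(g=0, x ≤ θ)`, `φ θ = P(g=1 | x=θ)`, `p = P(g=1)`,
so the gap `P(x ≤ θ | g=0) − P(x ≤ θ | g=1)` is `J0 θ / (1 - p) − J1 θ / p`. -/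
/-- Derivative of the positive-rate gap `D(θ) = P(x ≤ θ | g=0) − P(x ≤ θ | g=1)`.
`J1 θ = P(g=1, x ≤ θ)` and `J0 θ = P(g=0, x ≤ θ)` are joint CDFs with
derivatives `P(g=j | x=θ)·h_x(θ)` at `θ`, where `φ θ = P(g=1 | x=θ)` and
`p = P(g=1) ∈ (0,1)`.  Then `D'(θ) = h_x(θ)·(p − φ(θ))/(p·(1−p))`. -/
theorem positive_rate_gap_deriv
    (J1 J0 hx φ : ℝ → ℝ) (p : ℝ) (hp0 : 0 < p) (hp1 : p < 1) (θ : ℝ)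
    (h1 : HasDerivAt J1 (φ θ * hx θ) θ)
    (h0 : HasDerivAt J0 ((1 - φ θ) * hx θ) θ) :
    HasDerivAt (fun t => J0 t / (1 - p) - J1 t / p)
      (hx θ * (p - φ θ) / (p * (1 - p))) θ := by
  have hp : p ≠ 0 := hp0.ne'
  have hq : 1 - p ≠ 0 := (sub_pos.2 hp1).ne'
  refine ((h0.div_const (1 - p)).sub (h1.div_const p)).congr_deriv ?_
  field_simp
  ring
end

section
/- If θ_C < θ_F and the effective-threshold map B ↦ θ^(B) preserves order (θ_C^(B) ≤ θ_F^(B) for all B ≥ 0), and the unfairness function U : [0,1] → ℝ is increasing on [0,θ_U] and decreasing on [θ_U,1], and there exists B_U with θ_F^(B_U) = θ_U, then for all B ≥ B_U: U(θ_C^(B)) ≤ U(θ_F^(B)). -/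
open Set

theorem fairness_reversal_forward_general
    (U effC effF : ℝ → ℝ) (θU : ℝ)
    (horder : ∀ B, 0 ≤ B → effC B ≤ effF B)
    (hantiF : AntitoneOn effF (Ici 0))
    (hrange : ∀ B, 0 ≤ B → effC B ∈ Icc (0:ℝ) 1 ∧ effF B ∈ Icc (0:ℝ) 1)
    (hU₁ : MonotoneOn U (Icc 0 θU))
    (BU : ℝ) (hBU : 0 ≤ BU) (hBUeq : effF BU = θU) :
    ∀ B, BU ≤ B → U (effC B) ≤ U (effF B) := by
  intro B hB
  have hB0 : 0 ≤ B := hBU.trans hB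
  obtain ⟨⟨hC0, -⟩, ⟨hF0, -⟩⟩ := hrange B hB0
  have hCF : effC B ≤ effF B := horder B hB0
  -- Past `BU` both thresholds lie in `[0, θU]`, where `U` is increasing.
  have hFU : effF B ≤ θU := hBUeq ▸ hantiF hBU hB0 hB
  exact hU₁ ⟨hC0, hCF.trans hFU⟩ ⟨hF0, hFU⟩ hCF

/-- Fairness reversal (forward direction).  If `θ_C < θ_F`, the effective
thresholds preserve order and lie in `[0,1]`, the unfairness `U` is increasing
on `[0,θ_U]` and decreasing on `[θ_U,1]`, `θ_F^(B)` is nonincreasing in `B`,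
and `θ_F^(B_U) = θ_U` for some budget `B_U ≥ 0`, then for every `B ≥ B_U` the
fair threshold is at least as unfair as the base threshold:
`U(θ_C^(B)) ≤ U(θ_F^(B))`. -/
theorem fairness_reversal_forward
    (U effC effF : ℝ → ℝ) (θC θF θU : ℝ)
    (hθU : θU ∈ Icc (0:ℝ) 1)
    (hlt : θC < θF) (h0C : effC 0 = θC) (h0F : effF 0 = θF)
    (horder : ∀ B, 0 ≤ B → effC B ≤ effF B)
    (hantiF : AntitoneOn effF (Ici 0))
    (hrange : ∀ B, 0 ≤ B → effC B ∈ Icc (0:ℝ) 1 ∧ effF B ∈ Icc (0:ℝ) 1)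
    (hU₁ : MonotoneOn U (Icc 0 θU)) (hU₂ : AntitoneOn U (Icc θU 1))
    (BU : ℝ) (hBU : 0 ≤ BU) (hBUeq : effF BU = θU) :
    ∀ B, BU ≤ B → U (effC B) ≤ U (effF B) :=
  fairness_reversal_forward_general U effC effF θU horder hantiF hrange hU₁ BU hBU hBUeq
end

section
/- Let data be linearly separable at threshold θ* (y = 1 iff x ≥ θ*), so θ_C = θ* has accuracy 1 on unmanipulated data. Let X(θ,B) = {x < θ : c(x,θ) ≤ B} and suppose θ_F > θ_C. If x_F := inf X(θ_F,B) ≤ θ_C, then the post-manipulation accuracy of θ_F equals 1 − P(x ∈ [x_F, θ_C]), the post-manipulation accuracy of θ_C equals 1 − P(x ∈ X(θ_C,B)), and since c is monotone in |x−x'| gives x_F > x_C := inf X(θ_C,B), θ_F is strictly more accurate than θ_C on manipulated data. -/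
/-!
Since the cost only depends on `θ - x` and is monotone in it, the manipulable set at threshold `θ`
is an interval ending at `θ`, and raising the threshold translates it, so `x_F = x_C + (θ_F - θ_C)`.
Up to the endpoints (null sets), `θ_F` then misclassifies exactly `[x_F, θ_C]` and `θ_C` exactly
`X(θ_C, B) = [x_C, θ_C)`; the difference contains `(x_C, x_F)`, which has positive mass.
-/

open Set MeasureTheory ENNReal

/-- The paper's `X(θ, B)`, with the cost `ρ |θ - x|` written as `ρ (θ - x)` since `x < θ`. -/
def manipulable (ρ : ℝ → ℝ) (B θ : ℝ) : Set ℝ := {x | x < θ ∧ ρ (θ - x) ≤ B}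

/-- The points on which the threshold `θ`, applied after the agents in `M` moved up to `θ`,
agrees with the true labels `1[θ₀ ≤ x]`. -/
def correctlyClassified (M : Set ℝ) (θ θ₀ : ℝ) : Set ℝ := {x | (x ∈ M ∨ θ ≤ x) ↔ θ₀ ≤ x}

section Manipulable

variable {ρ : ℝ → ℝ} {B θ : ℝ}

theorem manipulable_add (d : ℝ) :
    manipulable ρ B (θ + d) = (fun x => x + d) '' manipulable ρ B θ := by
  rw [image_add_right]
  ext x
  simp only [manipulable, mem_ofPred_eq, mem_preimage]
  constructor <;> rintro ⟨h, hB⟩ <;> refine ⟨by linarith, ?_⟩ <;> convert hB using 2 <;> ring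

theorem csInf_manipulable_add (hne : (manipulable ρ B θ).Nonempty)
    (hbdd : BddBelow (manipulable ρ B θ)) (d : ℝ) :
    sInf (manipulable ρ B (θ + d)) = sInf (manipulable ρ B θ) + d := by
  rw [manipulable_add]
  exact ((OrderIso.addRight d).map_csInf' hne hbdd).symm

theorem Ioo_csInf_subset_manipulable (hρ : Monotone ρ) (hne : (manipulable ρ B θ).Nonempty) :
    Ioo (sInf (manipulable ρ B θ)) θ ⊆ manipulable ρ B θ := by
  rintro y ⟨hy, hyθ⟩
  obtain ⟨x, ⟨-, hxB⟩, hxy⟩ := exists_lt_of_csInf_lt hne hy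
  exact ⟨hyθ, (hρ (by linarith)).trans hxB⟩

theorem manipulable_subset_Ico (hbdd : BddBelow (manipulable ρ B θ)) :
    manipulable ρ B θ ⊆ Ico (sInf (manipulable ρ B θ)) θ :=
  fun _ hx => ⟨csInf_le hbdd hx, hx.1⟩

end Manipulable

section Misclassified

variable {M : Set ℝ} {a θ θ₀ : ℝ}

theorem Ioo_subset_compl_correctlyClassified (hM : Ioo a θ ⊆ M) (hθ : θ₀ ≤ θ) :
    Ioo a θ₀ ⊆ (correctlyClassified M θ θ₀)ᶜ := fun _ ⟨hax, hxθ₀⟩ hx =>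
  hxθ₀.not_ge (hx.1 (Or.inl (hM ⟨hax, hxθ₀.trans_le hθ⟩)))

theorem compl_correctlyClassified_subset_Icc (hM : Ioo a θ ⊆ M) (hM' : M ⊆ Ico a θ)
    (ha : a ≤ θ₀) (hθ : θ₀ ≤ θ) : (correctlyClassified M θ θ₀)ᶜ ⊆ Icc a θ₀ := by
  intro x hx
  have hx' : (x ∈ M ∨ θ ≤ x) ↔ x < θ₀ := by
    rw [← not_le]
    exact (not_iff.mp hx).not_right
  rcases lt_or_ge x θ₀ with hxθ₀ | hθ₀x
  · rcases hx'.2 hxθ₀ with hxM | hθx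
    · exact ⟨(hM' hxM).1, hxθ₀.le⟩
    · exact absurd (hxθ₀.trans_le hθ) hθx.not_gt
  · obtain ⟨hxM, hθx⟩ := not_or.mp (mt hx'.1 hθ₀x.not_gt)
    exact ⟨ha.trans hθ₀x, not_lt.mp fun hθ₀x' => hxM (hM ⟨ha.trans_lt hθ₀x', not_le.mp hθx⟩)⟩

end Misclassified

section Measure

variable {μ : Measure ℝ} {S : Set ℝ} {a b : ℝ}

theorem ae_eq_Icc_of_Ioo_subset_of_subset_Icc [NullSingletonClass μ] (hIoo : Ioo a b ⊆ S)
    (hIcc : S ⊆ Icc a b) : S =ᵐ[μ] Icc a b :=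
  hIcc.eventuallyLE.antisymm (Ioo_ae_eq_Icc.symm.le.trans hIoo.eventuallyLE)

theorem measure_correctlyClassified [IsProbabilityMeasure μ] [NullSingletonClass μ] {M : Set ℝ}
    {θ θ₀ : ℝ} (hM : Ioo a θ ⊆ M) (hM' : M ⊆ Ico a θ) (ha : a ≤ θ₀) (hθ : θ₀ ≤ θ) :
    μ (correctlyClassified M θ θ₀) = 1 - μ (Icc a θ₀) := by
  have hcompl : (correctlyClassified M θ θ₀)ᶜ =ᵐ[μ] Icc a θ₀ :=
    ae_eq_Icc_of_Ioo_subset_of_subset_Icc (Ioo_subset_compl_correctlyClassified hM hθ)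
      (compl_correctlyClassified_subset_Icc hM hM' ha hθ)
  rw [← prob_compl_eq_one_sub measurableSet_Icc, ← measure_congr hcompl.compl]
  exact congrArg μ (compl_compl _).symm

theorem measure_Icc_lt_measure_Icc [IsFiniteMeasure μ] {a' : ℝ} (hpos : 0 < μ (Ioo a a'))
    (hb : a' ≤ b) : μ (Icc a' b) < μ (Icc a b) := by
  obtain ⟨x, hax, hxa'⟩ := nonempty_of_measure_ne_zero hpos.ne'
  have hsub : Icc a' b ⊆ Icc a b := Icc_subset_Icc_left (hax.trans hxa').le
  have hdiff : Ioo a a' ⊆ Icc a b \ Icc a' b :=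
    fun y ⟨hay, hya'⟩ => ⟨⟨hay.le, (hya'.trans_le hb).le⟩, fun hy => hya'.not_ge hy.1⟩
  rw [← tsub_pos_iff_lt, ← measure_sdiff hsub measurableSet_Icc.nullMeasurableSet
    (measure_ne_top μ _)]
  exact hpos.trans_le (measure_mono hdiff)

end Measure

theorem accuracy_reversal_case_low_general
    (μ : Measure ℝ) [IsProbabilityMeasure μ] [NullSingletonClass μ]
    (hfull : ∀ a b : ℝ, a < b → 0 < μ (Ioo a b))
    (ρ : ℝ → ℝ) (hρ : StrictMono ρ)
    (c : ℝ → ℝ → ℝ) (hc : ∀ x x', c x x' = ρ |x' - x|)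
    (θC θF B : ℝ) (hθ : θC < θF)
    (X : ℝ → Set ℝ) (hXdef : ∀ θ, X θ = {x | x < θ ∧ c x θ ≤ B})
    (xF xC : ℝ) (hxF : xF = sInf (X θF)) (hxC : xC = sInf (X θC))
    (hneF : (X θF).Nonempty) (hneC : (X θC).Nonempty)
    (hbF : BddBelow (X θF)) (hbC : BddBelow (X θC))
    (hcase : xF ≤ θC)
    (acc : ℝ → ℝ≥0∞)
    (hacc : ∀ θ, acc θ = μ {x | (((x < θ ∧ c x θ ≤ B) ∨ θ ≤ x) ↔ θC ≤ x)}) :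
    acc θF = 1 - μ (Icc xF θC) ∧
    acc θC = 1 - μ (X θC) ∧
    xC < xF ∧
    acc θC < acc θF := by
  have hX : ∀ θ, X θ = manipulable ρ B θ := fun θ => by
    ext x
    simp only [hXdef, hc, manipulable, mem_ofPred_eq]
    exact and_congr_right fun hx => by rw [abs_of_pos (sub_pos.mpr hx)]
  have hacc' : ∀ θ, acc θ = μ (correctlyClassified (X θ) θ θC) := fun θ => by
    rw [hacc, hXdef]; rfl
  simp only [hX] at hxF hxC hneF hneC hbF hbC hacc'
  have hxF_eq : xF = xC + (θF - θC) := by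
    rw [hxF, hxC, ← csInf_manipulable_add hneC hbC, add_sub_cancel]
  have hxCxF : xC < xF := by linarith
  have hIooF := hxF ▸ Ioo_csInf_subset_manipulable hρ.monotone hneF
  have hIcoF := hxF ▸ manipulable_subset_Ico hbF
  have haccF := measure_correctlyClassified (μ := μ) hIooF hIcoF hcase hθ.le
  have hIooC := hxC ▸ Ioo_csInf_subset_manipulable hρ.monotone hneC
  have hIcoC := hxC ▸ manipulable_subset_Ico hbC
  have haccC := measure_correctlyClassified (μ := μ) hIooC hIcoC (hxCxF.le.trans hcase) le_rfl
  have hμXC : μ (X θC) = μ (Icc xC θC) := by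
    rw [hX]
    exact measure_congr
      (ae_eq_Icc_of_Ioo_subset_of_subset_Icc hIooC (hIcoC.trans Ico_subset_Icc_self))
  rw [hacc', hacc', haccF, haccC, hμXC]
  refine ⟨rfl, rfl, hxCxF, ?_⟩
  exact (AddLECancellable.tsub_lt_tsub_iff_left_of_le (cancel_of_ne one_ne_top)
    (cancel_of_ne (measure_ne_top μ _)) prob_le_one).2
    (measure_Icc_lt_measure_Icc (hfull _ _ hxCxF) hcase)

/-- Accuracy reversal, case `x_F ≤ θ_C`.  Data is linearly separable at
`θ_C` (true label `y = 1` iff `θ_C ≤ x`), agents with `x < θ` and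
`c(x,θ) ≤ B` manipulate to `θ`, and `θ_F > θ_C`.  If
`x_F = inf X(θ_F,B) ≤ θ_C`, then the post-manipulation accuracy of `θ_F` is
`1 − P(x ∈ [x_F, θ_C])`, that of `θ_C` is `1 − P(x ∈ X(θ_C,B))`, and since the
monotone cost gives `x_C < x_F`, `θ_F` is strictly more accurate than `θ_C`. -/
theorem accuracy_reversal_case_low
    (μ : Measure ℝ) [IsProbabilityMeasure μ] [NullSingletonClass μ]
    (hfull : ∀ a b : ℝ, a < b → 0 < μ (Ioo a b))
    (ρ : ℝ → ℝ) (hρ : StrictMono ρ) (hρ0 : ρ 0 = 0)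
    (c : ℝ → ℝ → ℝ) (hc : ∀ x x', c x x' = ρ |x' - x|)
    (θC θF B : ℝ) (hB : 0 ≤ B) (hθ : θC < θF)
    (X : ℝ → Set ℝ) (hXdef : ∀ θ, X θ = {x | x < θ ∧ c x θ ≤ B})
    (xF xC : ℝ) (hxF : xF = sInf (X θF)) (hxC : xC = sInf (X θC))
    (hneF : (X θF).Nonempty) (hneC : (X θC).Nonempty)
    (hbF : BddBelow (X θF)) (hbC : BddBelow (X θC))
    (hcase : xF ≤ θC)
    (acc : ℝ → ℝ≥0∞)
    (hacc : ∀ θ, acc θ = μ {x | (((x < θ ∧ c x θ ≤ B) ∨ θ ≤ x) ↔ θC ≤ x)}) :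
    acc θF = 1 - μ (Icc xF θC) ∧
    acc θC = 1 - μ (X θC) ∧
    xC < xF ∧
    acc θC < acc θF :=
  accuracy_reversal_case_low_general μ hfull ρ hρ c hc θC θF B hθ X hXdef xF xC hxF hxC hneF hneC
    hbF hbC hcase acc hacc
end

section
/- Suppose P(g=1|x) = φ_g(v_gᵀx) with φ_g strictly increasing, and let S₀(B) = {x : θ_C − B ≤ wᵀx < θ_F − B} be the disagreement slab between two shifted parallel linear classifiers (w a unit vector with wᵀ·direction aligned so v_g ⊙ w > 0 componentwise). If B is large enough that φ_g(v_gᵀx) ≤ P(g=1) for all x ∈ S₀(B), then P(x ∈ S₀(B) | g=0) − P(x ∈ S₀(B) | g=1) ≥ 0, i.e. the fair (higher-threshold) classifier is at least as unfair as the base classifier on the shifted distribution. -/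
open Set MeasureTheory ProbabilityTheory
open scoped RealInnerProductSpace

/-! On the slab `S₀` the posterior `φg ⟪vg, x⟫` of group 1 is at most the prior `p`, so integrating
it over `S₀` gives `P(x ∈ S₀, g = 1) ≤ p · P(x ∈ S₀)`: landing in the slab is negatively correlated
with `g = 1`. For an event `T` of probability `p ∈ (0, 1)` this negative correlation is equivalent
to `P(A | T) ≤ P(A | Tᶜ)`. -/

section

variable {Ω : Type*} [MeasurableSpace Ω] {μ : Measure Ω}

theorem cond_toReal_le_cond_compl_toReal [IsProbabilityMeasure μ] {T A : Set Ω}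
    (hT : MeasurableSet T) (hT0 : 0 < μ.real T) (hT1 : μ.real T < 1)
    (hAT : μ.real (A ∩ T) ≤ μ.real T * μ.real A) :
    (μ[|T] A).toReal ≤ (μ[|Tᶜ] A).toReal := by
  have hTc : μ.real Tᶜ = 1 - μ.real T := by rw [measureReal_compl hT, probReal_univ]
  have hsplit : μ.real (A ∩ T) + μ.real (Tᶜ ∩ A) = μ.real A := by
    rw [inter_comm Tᶜ, ← sdiff_eq]
    exact measureReal_inter_add_sdiff hT
  simp only [cond_apply hT, cond_apply hT.compl, ENNReal.toReal_mul, ENNReal.toReal_inv,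
    ← measureReal_def, hTc, inter_comm T A, inv_mul_eq_div]
  rw [div_le_div_iff₀ hT0 (by linarith)]
  nlinarith

theorem integral_indicator_comp_mul_le [IsFiniteMeasure μ] {E : Type*} [MeasurableSpace E]
    {X : Ω → E} (hX : Measurable X) {S : Set E} (hS : MeasurableSet S) {ψ : E → ℝ} {c : ℝ}
    (hc : 0 ≤ c) (hψ : ∀ x ∈ S, ψ x ≤ c) :
    ∫ ω, S.indicator (fun _ => (1 : ℝ)) (X ω) * ψ (X ω) ∂μ ≤ c * μ.real (X ⁻¹' S) := by
  have hbound : ∀ ω, S.indicator (fun _ => (1 : ℝ)) (X ω) * ψ (X ω)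
      ≤ (X ⁻¹' S).indicator (fun _ => c) ω := by
    intro ω
    by_cases h : X ω ∈ S <;> simp [h, hψ]
  have hconst : ∫ ω, (X ⁻¹' S).indicator (fun _ => c) ω ∂μ = c * μ.real (X ⁻¹' S) := by
    rw [integral_indicator_const c (hX hS), smul_eq_mul, mul_comm]
  by_cases hint : Integrable (fun ω => S.indicator (fun _ => (1 : ℝ)) (X ω) * ψ (X ω)) μ
  · exact hconst ▸ integral_mono hint ((integrable_const c).indicator (hX hS)) hbound
  · rw [integral_undef hint]
    positivity

end

theorem fairness_reversal_linear_general
    {Ω : Type*} [MeasurableSpace Ω] (d : ℕ)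
    (μ : Measure Ω) [IsProbabilityMeasure μ]
    (X : Ω → EuclideanSpace ℝ (Fin d)) (G : Ω → Bool)
    (hX : Measurable X) (hG : Measurable G)
    (vg w : EuclideanSpace ℝ (Fin d))
    (φg : ℝ → ℝ)
    (p : ℝ) (hp : p = (μ {ω | G ω = true}).toReal) (hp0 : 0 < p) (hp1 : p < 1)
    (hcondprob : ∀ S : Set (EuclideanSpace ℝ (Fin d)), MeasurableSet S →
      (μ ({ω | X ω ∈ S} ∩ {ω | G ω = true})).toReal
        = ∫ ω, S.indicator (fun _ => (1:ℝ)) (X ω) * φg ⟪vg, X ω⟫ ∂μ)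
    (θC θF B : ℝ)
    (S₀ : Set (EuclideanSpace ℝ (Fin d)))
    (hS₀ : S₀ = {x | θC - B ≤ ⟪w, x⟫ ∧ ⟪w, x⟫ < θF - B})
    (hbig : ∀ x ∈ S₀, φg ⟪vg, x⟫ ≤ p) :
    0 ≤ (μ[|{ω | G ω = false}] {ω | X ω ∈ S₀}).toReal
        - (μ[|{ω | G ω = true}] {ω | X ω ∈ S₀}).toReal := by
  have hS₀m : MeasurableSet S₀ :=
    hS₀ ▸ (continuous_const.inner continuous_id).measurable measurableSet_Ico
  have hT : MeasurableSet {ω | G ω = true} := hG (measurableSet_singleton true)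
  have hF : {ω | G ω = false} = {ω | G ω = true}ᶜ := by ext; simp
  have hprior : μ.real {ω | G ω = true} = p := hp.symm
  rw [hF, sub_nonneg]
  refine cond_toReal_le_cond_compl_toReal hT (hprior ▸ hp0) (hprior ▸ hp1) ?_
  rw [hprior, measureReal_def, hcondprob S₀ hS₀m]
  exact integral_indicator_comp_mul_le hX hS₀m hp0.le hbig

/-- Fairness reversal for shifted linear classifiers.  Suppose
`P(g=1|x) = φg(⟪v_g,x⟫)` with `φg` strictly increasing, the group prior is
`p = P(g=1) ∈ (0,1)`, and `S₀(B) = {x : θ_C − B ≤ ⟪w,x⟫ < θ_F − B}` is the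
disagreement slab between the shifted classifiers (`w` a unit vector aligned
componentwise with `v_g`).  If `B` is large enough that
`φg(⟪v_g,x⟫) ≤ p` for all `x ∈ S₀(B)`, then
`P(x ∈ S₀(B) | g=0) − P(x ∈ S₀(B) | g=1) ≥ 0`: the fair (higher-threshold)
classifier is at least as unfair as the base classifier. -/
theorem fairness_reversal_linear
    {Ω : Type*} [MeasurableSpace Ω] (d : ℕ)
    (μ : Measure Ω) [IsProbabilityMeasure μ]
    (X : Ω → EuclideanSpace ℝ (Fin d)) (G : Ω → Bool)
    (hX : Measurable X) (hG : Measurable G)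
    (vg w : EuclideanSpace ℝ (Fin d)) (hw : ‖w‖ = 1)
    (halign : ∀ i, 0 < vg i * w i)
    (φg : ℝ → ℝ) (hφ : StrictMono φg)
    (p : ℝ) (hp : p = (μ {ω | G ω = true}).toReal) (hp0 : 0 < p) (hp1 : p < 1)
    (hcondprob : ∀ S : Set (EuclideanSpace ℝ (Fin d)), MeasurableSet S →
      (μ ({ω | X ω ∈ S} ∩ {ω | G ω = true})).toReal
        = ∫ ω, S.indicator (fun _ => (1:ℝ)) (X ω) * φg ⟪vg, X ω⟫ ∂μ)
    (θC θF B : ℝ) (hθ : θC < θF)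
    (S₀ : Set (EuclideanSpace ℝ (Fin d)))
    (hS₀ : S₀ = {x | θC - B ≤ ⟪w, x⟫ ∧ ⟪w, x⟫ < θF - B})
    (hbig : ∀ x ∈ S₀, φg ⟪vg, x⟫ ≤ p) :
    0 ≤ (μ[|{ω | G ω = false}] {ω | X ω ∈ S₀}).toReal
        - (μ[|{ω | G ω = true}] {ω | X ω ∈ S₀}).toReal :=
  fairness_reversal_linear_general d μ X G hX hG vg w φg p hp hp0 hp1 hcondprob θC θF B S₀ hS₀ hbig
end
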